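/- arXiv:math/0507326 — 7 statements merged into one kernel-verified Lean document; each statement's English description precedes it below -/
import Mathlib

section
/- Let K be a field and consider the E-algebra homomorphism π : E[[z_1,...,z_k]] → E[[z_1]] defined by π(z_1) = z_1 and π(z_i) = γ_i z_1 for 2 ≤ i ≤ k, where E is a field containing a subfield L and γ_2,...,γ_k ∈ E are algebraically independent over L. Then the kernel of π intersected with L[[z_1,...,z_k]] is the zero ideal. -/
/-!
The coefficient of `z_0^n` in `π(f)` is the value at `(γ_i)_{i ≠ 0}` of the degree-`n` part of
`f` dehomogenized at `z_0 = 1`. When the coefficients of `f` lie in `L`, this is a polynomial over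
`L`, so algebraic independence forces it to vanish. Dehomogenizing is injective on monomials of a
fixed total degree, so every coefficient of `f` of degree `n` vanishes.
-/

open Finset MvPolynomial

theorem eq_of_sum_eq_of_forall_ne {ι M : Type*} [Fintype ι] [DecidableEq ι]
    [AddCancelCommMonoid M] {v w : ι → M} (a : ι) (hsum : ∑ i, v i = ∑ i, w i)
    (hne : ∀ i ≠ a, v i = w i) : v = w := by
  have hrest : ∑ i ∈ univ.erase a, v i = ∑ i ∈ univ.erase a, w i :=
    sum_congr rfl fun i hi => hne i (mem_erase.1 hi).1
  have ha : v a = w a := by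
    rw [← sum_erase_add _ _ (mem_univ a), ← sum_erase_add _ _ (mem_univ a), hrest] at hsum
    exact add_left_cancel hsum
  funext i
  by_cases hi : i = a
  · exact hi ▸ ha
  · exact hne i hi

theorem prod_subtype_ne_eq_prod {ι M : Type*} [Fintype ι] [DecidableEq ι] [CommMonoid M]
    {f : ι → M} {a : ι} (ha : f a = 1) : ∏ i : {i // i ≠ a}, f i = ∏ i, f i := by
  rw [← prod_erase univ ha]
  exact (prod_subtype _ (by simp) f).symm

section Dehomogenize

variable {R : Type*} [CommSemiring R] {k : ℕ} (a : Fin (k + 1))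

noncomputable def dropExponent (v : Fin (k + 1) → ℕ) : {i // i ≠ a} →₀ ℕ :=
  Finsupp.equivFunOnFinite.symm fun i => v i

/-- The degree-`n` part of the power series with coefficients `c`, with `z_a` set to `1`. -/
noncomputable def dehomogenizedPart (c : (Fin (k + 1) → ℕ) → R) (n : ℕ) :
    MvPolynomial {i // i ≠ a} R :=
  ∑ v ∈ Nat.antidiagonalTuple (k + 1) n, monomial (dropExponent a v) (c v)

theorem dropExponent_injOn (n : ℕ) :
    Set.InjOn (dropExponent a) (Nat.antidiagonalTuple (k + 1) n) := by
  intro v hv w hw hvw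
  refine eq_of_sum_eq_of_forall_ne a ?_ fun i hi => ?_
  · rw [Nat.mem_antidiagonalTuple.1 hv, Nat.mem_antidiagonalTuple.1 hw]
  · simpa [dropExponent] using DFunLike.congr_fun hvw ⟨i, hi⟩

theorem coeff_dehomogenizedPart (c : (Fin (k + 1) → ℕ) → R) {n : ℕ} {v : Fin (k + 1) → ℕ}
    (hv : v ∈ Nat.antidiagonalTuple (k + 1) n) :
    coeff (dropExponent a v) (dehomogenizedPart a c n) = c v := by
  rw [dehomogenizedPart, coeff_sum, sum_eq_single_of_mem v hv]
  · rw [coeff_monomial, if_pos rfl]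
  · intro w hw hwv
    rw [coeff_monomial, if_neg fun h => hwv (dropExponent_injOn a n hw hv h)]

theorem aeval_dehomogenizedPart {A : Type*} [CommSemiring A] [Algebra R A] {γ : Fin (k + 1) → A}
    (hγa : γ a = 1) (c : (Fin (k + 1) → ℕ) → R) (n : ℕ) :
    aeval (fun i : {i // i ≠ a} => γ i) (dehomogenizedPart a c n) =
      ∑ v ∈ Nat.antidiagonalTuple (k + 1) n, algebraMap R A (c v) * ∏ i, γ i ^ v i := by
  refine (map_sum _ _ _).trans (sum_congr rfl fun v _ => ?_)
  rw [aeval_monomial, Finsupp.prod_fintype _ _ fun _ => pow_zero _]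
  simp only [dropExponent, Finsupp.coe_equivFunOnFinite_symm]
  rw [prod_subtype_ne_eq_prod (f := fun i => γ i ^ v i) (by simp [hγa])]

end Dehomogenize

/-- The `E`-algebra homomorphism `π : E[[z_0,...,z_k]] → E[[z_0]]` with `π(z_0) = z_0` and
`π(z_i) = γ_i z_0` (encoded coefficientwise: the coefficient of `z_0^n` in `π(f)` is
`∑_{|d| = n} (coeff d f) ∏ γ_i^{d i}`, with `γ_0 = 1`).  If the `γ_i` (`i ≠ 0`) are
algebraically independent over a subfield `L ⊆ E`, then no nonzero power series all of whose
coefficients lie in `L` is in the kernel of `π`. -/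
theorem stmt1 (E : Type*) [Field E] (L : Subfield E) (k : ℕ)
    (γ : Fin (k + 1) → E) (hγ0 : γ 0 = 1)
    (hγ : AlgebraicIndependent L (fun i : {i : Fin (k + 1) // i ≠ 0} => γ i.1))
    (f : MvPowerSeries (Fin (k + 1)) E)
    (hfL : ∀ d : Fin (k + 1) →₀ ℕ, MvPowerSeries.coeff d f ∈ L)
    (hker : (PowerSeries.mk fun n => ∑ v ∈ Nat.antidiagonalTuple (k + 1) n,
        MvPowerSeries.coeff (Finsupp.equivFunOnFinite.symm v) f * ∏ i, γ i ^ v i :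
      PowerSeries E) = 0) :
    f = 0 := by
  ext d
  set n := ∑ i, d i
  let c : (Fin (k + 1) → ℕ) → L := fun v =>
    ⟨MvPowerSeries.coeff (Finsupp.equivFunOnFinite.symm v) f, hfL _⟩
  have hd : ⇑d ∈ Nat.antidiagonalTuple (k + 1) n := Nat.mem_antidiagonalTuple.2 rfl
  have hpart : dehomogenizedPart 0 c n = 0 := by
    refine hγ.eq_zero_of_aeval_eq_zero _ ?_
    rw [aeval_dehomogenizedPart 0 hγ0]
    have hcoeff := congrArg (PowerSeries.coeff n) hker
    rwa [PowerSeries.coeff_mk, map_zero] at hcoeff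
  have hc : c d = 0 := by rw [← coeff_dehomogenizedPart 0 c hd, hpart, coeff_zero]
  simpa [c] using congrArg Subtype.val hc
end

section
/- Let E be a field, let L ⊆ E be a subfield, and let γ_2,...,γ_k ∈ E be algebraically independent over L. Then the ideal q = (z_2 − γ_2 z_1, ..., z_k − γ_k z_1) of E[[z_1,...,z_k]] satisfies q ∩ L[[z_1,...,z_k]] = (0). -/
/-!
Substituting `z_0 ↦ t` and `z_i ↦ γ_i t` is a ring homomorphism `E[[z]] → E[[t]]` killing every
generator of `q`, so it kills `f`. The coefficient of `t^n` in the image of `f` is `P_n(γ)`, where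
`P_n ∈ L[y_1, …, y_k]` is the degree-`n` homogeneous part of `f` with `z_0` set to `1`. Algebraic
independence forces `P_n = 0`, and since `d_0 = n - (d_1 + ⋯ + d_k)` on a homogeneous part, the
coefficients of `P_n` are exactly those of `f` in degree `n`.
-/

open Finset

namespace Finsupp

variable {σ : Type*} [Fintype σ] [DecidableEq σ]

theorem subtypeDomain_ne_injOn_finsuppAntidiag (i₀ : σ) (n : ℕ) :
    Set.InjOn (subtypeDomain (M := ℕ) (· ≠ i₀)) (finsuppAntidiag (univ : Finset σ) n) := by
  intro d₁ hd₁ d₂ hd₂ h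
  have hne (i : σ) (hi : i ≠ i₀) : d₁ i = d₂ i := by
    simpa using DFunLike.congr_fun h ⟨i, hi⟩
  simp only [mem_coe, mem_finsuppAntidiag, subset_univ, and_true] at hd₁ hd₂
  rw [Fintype.sum_eq_add_sum_subtype_ne _ i₀] at hd₁ hd₂
  have := Fintype.sum_congr _ _ fun i : {i // i ≠ i₀} ↦ hne i i.2
  ext i
  by_cases hi : i = i₀
  · subst hi
    omega
  · exact hne i hi

theorem prod_subtypeDomain_ne_pow {M : Type*} [CommMonoid M] {w : σ → M} {i₀ : σ}
    (hw₀ : w i₀ = 1) (d : σ →₀ ℕ) :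
    ((d.subtypeDomain (· ≠ i₀)).prod fun i e ↦ w i ^ e) = d.prod fun i e ↦ w i ^ e := by
  rw [prod_fintype _ _ (fun _ ↦ pow_zero _), prod_fintype _ _ (fun _ ↦ pow_zero _),
    Fintype.prod_eq_mul_prod_subtype_ne _ i₀, hw₀, one_pow, one_mul]
  rfl

end Finsupp

theorem AlgebraicIndependent.eq_zero_of_sum_finsuppAntidiag_eq_zero
    {σ R A : Type*} [Fintype σ] [DecidableEq σ] [CommRing R] [CommRing A] [Algebra R A]
    {w : σ → A} {i₀ : σ} (hw₀ : w i₀ = 1)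
    (hw : AlgebraicIndependent R fun i : {i // i ≠ i₀} ↦ w i) {n : ℕ} {c : (σ →₀ ℕ) → R}
    (h : ∑ d ∈ finsuppAntidiag univ n, algebraMap R A (c d) * d.prod (fun i e ↦ w i ^ e) = 0) :
    ∀ d ∈ finsuppAntidiag univ n, c d = 0 := by
  set P : MvPolynomial {i // i ≠ i₀} R :=
    ∑ d ∈ finsuppAntidiag univ n, MvPolynomial.monomial (d.subtypeDomain (· ≠ i₀)) (c d)
  have hP : P = 0 := hw.eq_zero_of_aeval_eq_zero _ <| by
    simpa only [P, map_sum, MvPolynomial.aeval_monomial, Finsupp.prod_subtypeDomain_ne_pow hw₀]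
      using h
  intro d hd
  have := congrArg (MvPolynomial.coeff (d.subtypeDomain (· ≠ i₀))) hP
  rwa [MvPolynomial.coeff_zero, MvPolynomial.coeff_sum, sum_eq_single_of_mem d hd,
    MvPolynomial.coeff_monomial, if_pos rfl] at this
  intro d' hd' hne
  rw [MvPolynomial.coeff_monomial, if_neg]
  exact fun heq ↦ hne (Finsupp.subtypeDomain_ne_injOn_finsuppAntidiag i₀ n hd' hd heq)

namespace MvPowerSeries

variable {σ R : Type*} [Fintype σ] [CommRing R]

theorem hasSubst_C_mul_X (w : σ → R) :
    HasSubst (fun i ↦ PowerSeries.C (w i) * PowerSeries.X : σ → PowerSeries R) :=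
  hasSubst_of_constantCoeff_zero fun i ↦
    show PowerSeries.constantCoeff _ = 0 by simp

theorem subst_C_mul_X_X_sub_C_mul_X {w : σ → R} {i₀ : σ} (hw₀ : w i₀ = 1) (i : σ) :
    subst (fun i ↦ PowerSeries.C (w i) * PowerSeries.X) (X i - C (w i) * X i₀ : MvPowerSeries σ R)
      = 0 := by
  have ha := hasSubst_C_mul_X w
  rw [subst_sub ha, subst_mul ha, subst_X ha, subst_X ha, subst_C, hw₀, map_one, one_mul]
  exact sub_self _

theorem coeff_subst_C_mul_X [DecidableEq σ] (w : σ → R) (f : MvPowerSeries σ R) (n : ℕ) :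
    PowerSeries.coeff n (subst (fun i ↦ PowerSeries.C (w i) * PowerSeries.X) f) =
      ∑ d ∈ finsuppAntidiag univ n, coeff d f * d.prod fun i e ↦ w i ^ e := by
  have hmon (d : σ →₀ ℕ) : (d.prod fun i e ↦ (PowerSeries.C (w i) * PowerSeries.X) ^ e) =
      PowerSeries.C (d.prod fun i e ↦ w i ^ e) * PowerSeries.X ^ (univ.sum d) := by
    rw [Finsupp.prod_fintype _ _ (fun _ ↦ pow_zero _),
      Finsupp.prod_fintype _ _ (fun _ ↦ pow_zero _)]
    simp only [mul_pow, prod_mul_distrib, map_prod, map_pow, prod_pow_eq_pow_sum]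
  have hterm (d : σ →₀ ℕ) : coeff d f • PowerSeries.coeff n
      (d.prod fun i e ↦ (PowerSeries.C (w i) * PowerSeries.X) ^ e) =
      if d ∈ finsuppAntidiag univ n then coeff d f * d.prod fun i e ↦ w i ^ e else 0 := by
    rw [hmon, PowerSeries.coeff_C_mul_X_pow]
    simp [eq_comm]
  have hcoeff := PowerSeries.coeff_def (R := R) (Finsupp.single_eq_same (a := ()) (b := n))
  rw [hcoeff, coeff_subst (hasSubst_C_mul_X w)]
  simp only [← hcoeff, hterm]
  rw [finsum_eq_sum_of_support_subset _ (s := finsuppAntidiag univ n), sum_ite_mem, inter_self]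
  exact fun d hd ↦ by_contra fun h ↦ hd (if_neg h)

end MvPowerSeries

open MvPowerSeries

/-- If `γ_i` (for `i ≠ 0`) are elements of a field `E` algebraically independent over a
subfield `L`, then the ideal `(z_i - γ_i z_0 : i ≠ 0)` of `E[[z_0,...,z_k]]` meets
`L[[z_0,...,z_k]]` trivially. -/
theorem stmt2 (E : Type*) [Field E] (L : Subfield E) (k : ℕ)
    (γ : Fin (k + 1) → E)
    (hγ : AlgebraicIndependent L (fun i : {i : Fin (k + 1) // i ≠ 0} => γ i.1))
    (f : MvPowerSeries (Fin (k + 1)) E)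
    (hfL : ∀ d : Fin (k + 1) →₀ ℕ, MvPowerSeries.coeff (σ := Fin (k + 1)) (R := E) d f ∈ L)
    (hfq : f ∈ Ideal.span (Set.range (fun i : {i : Fin (k + 1) // i ≠ 0} =>
      (MvPowerSeries.X i.1 - MvPowerSeries.C (σ := Fin (k + 1)) (R := E) (γ i.1) * MvPowerSeries.X 0 :
        MvPowerSeries (Fin (k + 1)) E)))) :
    f = 0 := by
  set w := Function.update γ 0 1
  have hw₀ : w 0 = 1 := Function.update_self 0 1 γ
  have hw (i : {i : Fin (k + 1) // i ≠ 0}) : w i = γ i := Function.update_of_ne i.2 _ _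
  have hsubst : subst (fun i ↦ PowerSeries.C (w i) * PowerSeries.X) f = 0 := by
    rw [← substAlgHom_apply (hasSubst_C_mul_X w), ← RingHom.mem_ker]
    refine Ideal.span_le.mpr ?_ hfq
    rintro _ ⟨i, rfl⟩
    rw [SetLike.mem_coe, RingHom.mem_ker, substAlgHom_apply]
    simpa only [hw i] using subst_C_mul_X_X_sub_C_mul_X hw₀ i.1
  have hw' : AlgebraicIndependent L fun i : {i : Fin (k + 1) // i ≠ 0} ↦ w i := by
    simpa only [hw] using hγ
  ext d
  have hd := hw'.eq_zero_of_sum_finsuppAntidiag_eq_zero hw₀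
    (c := fun d ↦ ⟨coeff d f, hfL d⟩) (n := univ.sum d)
    ((coeff_subst_C_mul_X w f _).symm.trans (by rw [hsubst, map_zero])) d (by simp)
  simpa using congrArg Subtype.val hd
end

section
/- Let F be a countable field and let D_0 be a countable Noetherian local subring of F[[z,t]] whose completion is F[[z,t]]. Then there exists a power series γ ∈ zF[[z]] such that (t − γ)F[[z,t]] ∩ D_0 = (0); that is, the height-one prime (t − γ) lies in the generic formal fiber of D_0. -/
/-!
For `γ` in the maximal ideal of `F⟦z⟧`, Weierstrass division by `t - γ` identifies
`F⟦z⟧⟦t⟧ ⧸ (t - γ)` with `F⟦z⟧`, so the `t - γ` are pairwise non-associate primes. A nonzero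
`d` divisible by `n` of them is divisible by their product, hence lies in the `n`-th power of
the ideal of series with constant term in `(z)`; by Krull's intersection theorem this happens
for only finitely many `γ`. So the countably many nonzero elements of `D₀` exclude only
countably many `γ`, while `zF⟦z⟧` is uncountable.
-/

theorem Finset.prod_dvd_of_prime_of_pairwise_not_dvd {ι M : Type*} [CommMonoidWithZero M]
    {p : ι → M} {s : Finset ι} {f : M} (hp : ∀ i ∈ s, Prime (p i))
    (hs : (s : Set ι).Pairwise fun i j ↦ ¬ p i ∣ p j) (hf : ∀ i ∈ s, p i ∣ f) :
    ∏ i ∈ s, p i ∣ f := by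
  classical
  induction s using Finset.induction_on with
  | empty => simp
  | insert i s hi ih =>
    simp only [Finset.mem_insert, forall_eq_or_imp] at hp hf
    rw [Finset.coe_insert] at hs
    obtain ⟨g, rfl⟩ := ih hp.2 (hs.mono (Set.subset_insert i s)) hf.2
    have hi_not_dvd : ¬ p i ∣ ∏ j ∈ s, p j := by
      rw [hp.1.dvd_finsetProd_iff]
      rintro ⟨j, hj, hij⟩
      exact hs (Set.mem_insert i s) (Set.mem_insert_of_mem i hj) (by rintro rfl; exact hi hj) hij
    rw [Finset.prod_insert hi, mul_comm]
    exact mul_dvd_mul_left _ ((hp.1.dvd_or_dvd hf.1).resolve_left hi_not_dvd)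

theorem Polynomial.isDistinguishedAt_X_sub_C {A : Type*} [CommRing A] {I : Ideal A} {a : A}
    (ha : a ∈ I) : (X - C a).IsDistinguishedAt I where
  mem {n} hn := by
    obtain rfl : n = 0 := by have := natDegree_X_sub_C_le (R := A) a; omega
    simpa using I.neg_mem ha
  monic := monic_X_sub_C a

namespace PowerSeries

theorem not_countable_span_X {R : Type*} [CommRing R] [Nontrivial R] :
    ¬ ((Ideal.span {X} : Ideal R⟦X⟧) : Set R⟦X⟧).Countable := by
  have : Uncountable (ℕ → R) := by
    rw [← Cardinal.aleph0_lt_mk_iff, Cardinal.mk_arrow, Cardinal.mk_nat]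
    simpa using Cardinal.cantor' _ (Cardinal.one_lt_iff_nontrivial.2 ‹_›)
  have hmk : Function.Injective (mk : (ℕ → R) → R⟦X⟧) :=
    fun f g h ↦ funext fun n ↦ by simpa using congrArg (coeff n) h
  have : Uncountable R⟦X⟧ := hmk.uncountable
  have hX_mul : Function.Injective fun φ : R⟦X⟧ ↦
      (⟨X * φ, Ideal.mem_span_singleton.2 (dvd_mul_right X φ)⟩ : Ideal.span {X}) :=
    fun φ ψ h ↦ X_mul_cancel (congrArg Subtype.val h)
  intro h
  have := h.to_subtype
  exact not_countable hX_mul.countable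

variable {A : Type*} [CommRing A] {I : Ideal A} [IsAdicComplete I A] {a : A}

/-- Weierstrass division by `X - C a` identifies `A⟦X⟧ ⧸ (X - C a)` with `A[X] ⧸ (X - C a)`. -/
noncomputable def quotientSpanXSubCAlgEquiv (ha : a ∈ I) :
    (A⟦X⟧ ⧸ Ideal.span {X - C a}) ≃ₐ[A] A :=
  (Ideal.quotientEquivAlgOfEq A (by simp)).trans <|
    (Polynomial.isDistinguishedAt_X_sub_C ha).algEquivQuotient.symm.trans
      (Polynomial.quotientSpanXSubCAlgEquiv a)

theorem C_mem_span_X_sub_C_iff (ha : a ∈ I) {b : A} :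
    C b ∈ Ideal.span {X - C a} ↔ b = 0 := by
  rw [← Ideal.Quotient.eq_zero_iff_mem,
    show Ideal.Quotient.mk _ (C b) = algebraMap A _ b from rfl,
    ← map_eq_zero_iff _ (quotientSpanXSubCAlgEquiv ha).injective, AlgEquiv.commutes,
    Algebra.algebraMap_self_apply]

theorem X_sub_C_dvd_X_sub_C_iff (ha : a ∈ I) {b : A} : X - C a ∣ X - C b ↔ a = b := by
  rw [show (X : A⟦X⟧) - C b = X - C a + C (a - b) by rw [map_sub]; ring,
    dvd_add_right dvd_rfl, ← Ideal.mem_span_singleton, C_mem_span_X_sub_C_iff ha, sub_eq_zero]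

theorem prime_X_sub_C [IsDomain A] (ha : a ∈ I) : Prime (X - C a : A⟦X⟧) := by
  have := (quotientSpanXSubCAlgEquiv ha).toMulEquiv.isDomain
  refine (Ideal.span_singleton_prime ?_).1 ((Ideal.Quotient.isDomain_iff_prime _).1 this)
  intro h
  simpa using congrArg (coeff 1) h

theorem finite_setOf_X_sub_C_dvd [IsNoetherianRing A] [IsDomain A] (hI : I ≠ ⊤) {f : A⟦X⟧}
    (hf : f ≠ 0) : {a | a ∈ I ∧ X - C a ∣ f}.Finite := by
  set J := I.comap constantCoeff
  have hJ : J ≠ ⊤ := Ideal.comap_ne_top _ hI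
  have hX_sub_C : ∀ a ∈ I, X - C a ∈ J := fun a ha ↦ by simpa [J] using I.neg_mem ha
  by_contra hinf
  refine hf (Ideal.mem_bot.1 ?_)
  rw [← Ideal.iInf_pow_eq_bot_of_isDomain J hJ, Ideal.mem_iInf]
  intro n
  obtain ⟨s, hs, rfl⟩ := Set.Infinite.exists_subset_card_eq hinf n
  refine (J ^ s.card).mem_of_dvd (Finset.prod_dvd_of_prime_of_pairwise_not_dvd
    (fun a ha ↦ prime_X_sub_C (hs ha).1) ?_ fun a ha ↦ (hs ha).2) ?_
  · intro a ha b _ hab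
    rwa [X_sub_C_dvd_X_sub_C_iff (hs ha).1]
  · rw [← Finset.prod_const]
    exact Ideal.prod_mem_prod fun a ha ↦ hX_sub_C a (hs ha).1

theorem exists_mem_forall_X_sub_C_dvd_eq_zero [IsNoetherianRing A] [IsDomain A] (hI : I ≠ ⊤)
    (hI_uncountable : ¬ (I : Set A).Countable) {S : Set A⟦X⟧} (hS : S.Countable) :
    ∃ a ∈ I, ∀ f ∈ S, X - C a ∣ f → f = 0 := by
  by_contra! h
  have hbad : (⋃ f ∈ S \ {0}, {a | a ∈ I ∧ X - C a ∣ f}).Countable :=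
    (hS.mono Set.sdiff_subset).biUnion fun f hf ↦ (finite_setOf_X_sub_C_dvd hI hf.2).countable
  refine hI_uncountable (hbad.mono fun a ha ↦ ?_)
  obtain ⟨f, hfS, hdvd, hf⟩ := h a ha
  exact Set.mem_biUnion (x := f) ⟨hfS, hf⟩ ⟨ha, hdvd⟩

end PowerSeries

open PowerSeries

open IsLocalRing in
theorem stmt6_general (F : Type*) [Field F]
    (D0 : Subring (PowerSeries (PowerSeries F)))
    [Countable D0] :
    ∃ γ : PowerSeries F, PowerSeries.constantCoeff γ = 0 ∧
      Ideal.comap D0.subtype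
        (Ideal.span {(PowerSeries.X - PowerSeries.C γ :
          PowerSeries (PowerSeries F))}) = ⊥ := by
  have hX : (Ideal.span {X} : Ideal F⟦X⟧) ≠ ⊤ :=
    maximalIdeal_eq_span_X (k := F) ▸ (maximalIdeal.isMaximal F⟦X⟧).ne_top
  obtain ⟨γ, hγ, hD0⟩ := exists_mem_forall_X_sub_C_dvd_eq_zero hX not_countable_span_X
    (Set.countable_coe_iff.1 ‹Countable D0›)
  refine ⟨γ, X_dvd_iff.1 (Ideal.mem_span_singleton.1 hγ), eq_bot_iff.2 fun d hd ↦ ?_⟩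
  exact Ideal.mem_bot.2 (Subtype.ext (hD0 d d.2 (Ideal.mem_span_singleton.1 hd)))

set_option synthInstance.maxHeartbeats 1000000 in
set_option maxHeartbeats 1000000 in
open IsLocalRing in
/-- Let `F` be a countable field and `D₀` a countable Noetherian local subring of
`F[[z,t]] = (F[[z]])[[t]]` whose completion is `F[[z,t]]` (encoded: `D₀` is dense in the
maximal-ideal-adic topology and carries the subspace filtration).  Then there is
`γ ∈ zF[[z]]` with `(t - γ)F[[z,t]] ∩ D₀ = (0)`. -/
theorem stmt6 (F : Type*) [Field F] [Countable F]
    (D0 : Subring (PowerSeries (PowerSeries F)))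
    [Countable D0] [IsNoetherianRing D0] [IsLocalRing D0]
    (hdense : ∀ f : PowerSeries (PowerSeries F), ∀ k : ℕ, ∃ d ∈ D0,
      f - d ∈ (maximalIdeal (PowerSeries (PowerSeries F))) ^ k)
    (hfilt : ∀ k : ℕ,
      Ideal.comap D0.subtype ((maximalIdeal (PowerSeries (PowerSeries F))) ^ k) =
        (maximalIdeal D0) ^ k) :
    ∃ γ : PowerSeries F, PowerSeries.constantCoeff γ = 0 ∧
      Ideal.comap D0.subtype
        (Ideal.span {(PowerSeries.X - PowerSeries.C γ :
          PowerSeries (PowerSeries F))}) = ⊥ :=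
  stmt6_general F D0
end

section
/- With the same setup: V a DVR with K[z] ⊆ V ⊆ K[[z]] and completion K[[z]], ω_1,...,ω_r ∈ V[[t]] algebraically independent over Q(V)(t), D = Q(V)(t, ω_1,...,ω_r) ∩ V[[t]], and γ ∈ zK[[z]]. If γ, ω_1(γ),...,ω_r(γ) are algebraically independent over Q(V), then (t − γ)K[[z,t]] ∩ D = (0). -/
/-- Substitution `t ↦ γ` in `ω ∈ K[[z]][[t]]`, for `γ ∈ zK[[z]]`:
`ω(γ) = ∑_j β_j γ^j` where `ω = ∑_j β_j t^j`. -/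
noncomputable def psEval {K : Type*} [Field K]
    (ω : PowerSeries (PowerSeries K)) (γ : PowerSeries K) : PowerSeries K :=
  PowerSeries.mk fun n => PowerSeries.coeff (R := K) n
    (∑ j ∈ Finset.range (n + 1), (PowerSeries.coeff (R := PowerSeries K) j ω) * γ ^ j)

/-!
If `f = P / Q` with `P, Q` polynomials over `V` in `t, ω_1, …, ω_r` and `Q ≠ 0`, apply the
substitution `t ↦ γ`, a ring homomorphism `K[[z]][[t]] → K[[z]]` because `γ` has no constant term.
It kills `t - γ` and hence `P = f Q`; but the image of `P` is the same polynomial evaluated at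
`γ, ω_1(γ), …, ω_r(γ)`, so algebraic independence over `Q(V)` forces `P = 0`, and then `f = 0`
since `K[[z]][[t]]` is a domain.
-/

open PowerSeries

theorem exists_ne_zero_mul_mem_closure_of_mem_closure_image {A F : Type*} [CommRing A] [Field F]
    (i : A →+* F) (hi : Function.Injective i) {s : Set A} {f : A}
    (hf : i f ∈ Subfield.closure (i '' s)) :
    ∃ Q ∈ Subring.closure s, Q ≠ 0 ∧ f * Q ∈ Subring.closure s := by
  rw [Subfield.mem_closure_iff, ← RingHom.map_closure] at hf
  obtain ⟨_, ⟨P, hP, rfl⟩, _, ⟨Q, hQ, rfl⟩, hPQ⟩ := hf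
  by_cases hQ0 : Q = 0
  · have : Nontrivial A := i.domain_nontrivial
    have hf0 : f = 0 := hi (by rw [← hPQ, hQ0, map_zero, div_zero])
    exact ⟨1, one_mem _, one_ne_zero, by simp [hf0, zero_mem]⟩
  · have hiQ : i Q ≠ 0 := (map_ne_zero_iff i hi).mpr hQ0
    refine ⟨Q, hQ, hQ0, ?_⟩
    rwa [show f * Q = P from hi (by rw [map_mul, ← hPQ, div_mul_cancel₀ _ hiQ])]

theorem Subring.closure_image_union_range_le_range_eval₂Hom {R A ι : Type*} [CommRing R]
    [CommRing A] (V : Subring R) (ρ : R →+* A) (G : ι → A) :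
    Subring.closure (ρ '' V ∪ Set.range G) ≤
      (MvPolynomial.eval₂Hom (ρ.comp V.subtype) G).range := by
  rw [Subring.closure_le]
  rintro _ (⟨v, hv, rfl⟩ | ⟨k, rfl⟩)
  · exact ⟨MvPolynomial.C ⟨v, hv⟩, MvPolynomial.eval₂Hom_C _ _ _⟩
  · exact ⟨MvPolynomial.X k, MvPolynomial.eval₂Hom_X' _ _ _⟩

theorem MvPolynomial.eval₂Hom_subtype_injective_of_algebraicIndependent {R L ι : Type*}
    [CommRing R] [Field L] (V : Subring R) (φ : R →+* L) (hφ : Function.Injective φ) {g : ι → R}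
    (hg : AlgebraicIndependent (Subfield.closure (φ '' V)) (φ ∘ g)) :
    Function.Injective (eval₂Hom V.subtype g) := by
  let χ : V →+* Subfield.closure (φ '' V) :=
    (φ.comp V.subtype).codRestrict _ fun v => Subfield.subset_closure ⟨v, v.2, rfl⟩
  have hχ : Function.Injective χ := fun v w h => Subtype.ext (hφ (congrArg Subtype.val h))
  refine (injective_iff_map_eq_zero _).mpr fun q hq => map_injective χ hχ ?_
  refine (hg.eq_zero_of_aeval_eq_zero _ ?_).trans (map_zero _).symm
  rw [aeval_def, eval₂_map]
  change eval₂ (φ.comp V.subtype) (φ ∘ g) q = 0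
  rw [← eval₂_comp_left, ← map_zero φ]
  exact congrArg φ hq

theorem PowerSeries.coeff_eval_trunc_coe {R : Type*} [CommRing R] {γ : R⟦X⟧}
    (hγ : constantCoeff γ = 0) (P : Polynomial R⟦X⟧) {n m : ℕ} (h : n < m) :
    coeff n ((trunc m (P : R⟦X⟧⟦X⟧)).eval γ) = coeff n (P.eval γ) := by
  obtain ⟨Q, hQ⟩ : Polynomial.X ^ m ∣ P - trunc m (P : R⟦X⟧⟦X⟧) :=
    Polynomial.X_pow_dvd_iff.mpr fun d hd => by simp [coeff_trunc, hd]
  obtain ⟨δ, rfl⟩ := X_dvd_iff.mpr hγ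
  have hP : P.eval (X * δ) =
      (trunc m (P : R⟦X⟧⟦X⟧)).eval (X * δ) + X ^ m * (δ ^ m * Q.eval (X * δ)) := by
    rw [← sub_eq_iff_eq_add', ← Polynomial.eval_sub, hQ]
    simp only [Polynomial.eval_mul, Polynomial.eval_pow, Polynomial.eval_X]
    ring
  rw [hP, map_add, coeff_X_pow_mul', if_neg (by omega), add_zero]

section psEval

variable {K : Type*} [Field K] {γ : K⟦X⟧}

theorem coeff_psEval (p : K⟦X⟧⟦X⟧) (n : ℕ) :
    coeff n (psEval p γ) = coeff n ((trunc (n + 1) p).eval γ) := by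
  rw [psEval, coeff_mk, Polynomial.eval, eval₂_trunc_eq_sum_range]
  rfl

theorem coeff_psEval_of_lt (hγ : constantCoeff γ = 0) (p : K⟦X⟧⟦X⟧) {n m : ℕ} (h : n < m) :
    coeff n (psEval p γ) = coeff n ((trunc m p).eval γ) := by
  rw [coeff_psEval, ← trunc_trunc_of_le p h, coeff_eval_trunc_coe hγ _ n.lt_succ_self]

theorem psEval_coe (hγ : constantCoeff γ = 0) (P : Polynomial K⟦X⟧) :
    psEval (P : K⟦X⟧⟦X⟧) γ = P.eval γ := by
  ext n
  rw [coeff_psEval, coeff_eval_trunc_coe hγ _ n.lt_succ_self]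

theorem trunc_psEval (hγ : constantCoeff γ = 0) (p : K⟦X⟧⟦X⟧) (m : ℕ) :
    trunc m (psEval p γ) = trunc m ((trunc m p).eval γ) := by
  ext n
  simp only [coeff_trunc]
  split_ifs with h
  exacts [coeff_psEval_of_lt hγ p h, rfl]

theorem psEval_C (a : K⟦X⟧) : psEval (C a) γ = a := by
  ext n
  rw [coeff_psEval, trunc_C, Polynomial.eval_C]

theorem psEval_X (hγ : constantCoeff γ = 0) : psEval (X : K⟦X⟧⟦X⟧) γ = γ := by
  simpa using psEval_coe hγ Polynomial.X

theorem psEval_add (p q : K⟦X⟧⟦X⟧) : psEval (p + q) γ = psEval p γ + psEval q γ := by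
  ext n
  simp [coeff_psEval]

theorem psEval_mul (hγ : constantCoeff γ = 0) (p q : K⟦X⟧⟦X⟧) :
    psEval (p * q) γ = psEval p γ * psEval q γ := by
  ext n
  rw [coeff_psEval, ← trunc_trunc_mul_trunc, ← Polynomial.coe_mul,
    coeff_eval_trunc_coe hγ _ n.lt_succ_self, Polynomial.eval_mul,
    coeff_mul_eq_coeff_trunc_mul_trunc _ _ n.lt_succ_self,
    coeff_mul_eq_coeff_trunc_mul_trunc (psEval p γ) _ n.lt_succ_self,
    trunc_psEval hγ, trunc_psEval hγ]

noncomputable def psEvalHom (hγ : constantCoeff γ = 0) : K⟦X⟧⟦X⟧ →+* K⟦X⟧ where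
  toFun p := psEval p γ
  map_one' := by simpa using psEval_C (γ := γ) 1
  map_mul' := psEval_mul hγ
  map_zero' := by simpa using psEval_C (γ := γ) 0
  map_add' := psEval_add

theorem span_X_sub_C_le_ker_psEvalHom (hγ : constantCoeff γ = 0) :
    Ideal.span {X - C γ} ≤ RingHom.ker (psEvalHom hγ) := by
  rw [Ideal.span_le, Set.singleton_subset_iff, SetLike.mem_coe, RingHom.mem_ker, map_sub]
  exact sub_eq_zero.mpr ((psEval_X hγ).trans (psEval_C γ).symm)

theorem psEvalHom_comp_eval₂Hom {ι : Type*} (hγ : constantCoeff γ = 0) (V : Subring K⟦X⟧)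
    (G : ι → K⟦X⟧⟦X⟧) :
    (psEvalHom hγ).comp (MvPolynomial.eval₂Hom ((C (R := K⟦X⟧)).comp V.subtype) G) =
      MvPolynomial.eval₂Hom V.subtype fun k => psEval (G k) γ := by
  rw [MvPolynomial.comp_eval₂Hom]
  congr 1
  exact RingHom.ext fun v => psEval_C (v : K⟦X⟧)

end psEval

theorem stmt10_general (K : Type*) [Field K] (r : ℕ)
    (V : Subring (PowerSeries K))
    (ω : Fin r → PowerSeries (PowerSeries K))
    (γ : PowerSeries K) (hγ : PowerSeries.constantCoeff (R := K) γ = 0)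
    (hindep :
      AlgebraicIndependent
      (Subfield.closure
        ((algebraMap (PowerSeries K) (FractionRing (PowerSeries K))) ''
          (V : Set (PowerSeries K))))
      (Fin.cons (algebraMap (PowerSeries K) (FractionRing (PowerSeries K)) γ)
        (fun i : Fin r => algebraMap (PowerSeries K) (FractionRing (PowerSeries K))
          (psEval (ω i) γ)))) :
    ∀ f : PowerSeries (PowerSeries K),
      (∀ j : ℕ, PowerSeries.coeff (R := PowerSeries K) j f ∈ V) →
      algebraMap (PowerSeries (PowerSeries K)) (FractionRing (PowerSeries (PowerSeries K))) f ∈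
        Subfield.closure
          ((fun v : PowerSeries K =>
              algebraMap (PowerSeries (PowerSeries K))
                (FractionRing (PowerSeries (PowerSeries K)))
                (PowerSeries.C (R := PowerSeries K) v)) '' (V : Set (PowerSeries K)) ∪
            {algebraMap (PowerSeries (PowerSeries K))
              (FractionRing (PowerSeries (PowerSeries K))) PowerSeries.X} ∪
            Set.range (fun i : Fin r => algebraMap (PowerSeries (PowerSeries K))
              (FractionRing (PowerSeries (PowerSeries K))) (ω i))) →
      f ∈ Ideal.span {(PowerSeries.X - PowerSeries.C (R := PowerSeries K) γ :
        PowerSeries (PowerSeries K))} →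
      f = 0 := by
  intro f _ hfD hft
  set i := algebraMap K⟦X⟧⟦X⟧ (FractionRing K⟦X⟧⟦X⟧)
  have hgen : (fun v => i (C v)) '' V ∪ {i X} ∪ Set.range (fun k => i (ω k)) =
      i '' (C '' V ∪ Set.range (Fin.cons X ω)) := by
    simp only [Fin.range_cons, Set.image_union, Set.image_singleton, Set.image_image,
      Set.insert_eq, Set.union_assoc, ← Set.range_comp, Function.comp_def]
  obtain ⟨Q, -, hQ, hfQ⟩ := exists_ne_zero_mul_mem_closure_of_mem_closure_image i
    (IsFractionRing.injective _ _) (hgen ▸ hfD)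
  obtain ⟨q, hq⟩ := Subring.closure_image_union_range_le_range_eval₂Hom V C (Fin.cons X ω) hfQ
  have hvalues : (fun k => psEval ((Fin.cons X ω : Fin (r + 1) → K⟦X⟧⟦X⟧) k) γ) =
      Fin.cons γ fun k => psEval (ω k) γ := by
    funext k
    refine Fin.cases ?_ (fun k => ?_) k <;> simp [psEval_X hγ]
  have hq0 : q = 0 := by
    refine (injective_iff_map_eq_zero (MvPolynomial.eval₂Hom V.subtype
      (Fin.cons γ fun k => psEval (ω k) γ))).mp ?_ q ?_
    · refine MvPolynomial.eval₂Hom_subtype_injective_of_algebraicIndependent V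
        (algebraMap K⟦X⟧ (FractionRing K⟦X⟧)) (IsFractionRing.injective _ _) ?_
      rwa [Fin.comp_cons]
    · rw [← hvalues, ← psEvalHom_comp_eval₂Hom hγ, RingHom.comp_apply, hq]
      exact span_X_sub_C_le_ker_psEvalHom hγ (Ideal.mul_mem_right _ _ hft)
  have hfQ0 : f * Q = 0 := by rw [← hq, hq0, map_zero]
  exact (mul_eq_zero.mp hfQ0).resolve_right hQ

set_option synthInstance.maxHeartbeats 1000000 in
set_option maxHeartbeats 1000000 in
/-- Proposition 5.3, (ii) ⇒ (i).  `V` is a DVR with `K[z] ⊆ V ⊆ K[[z]]` and completion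
`K[[z]]`, `ω_1,...,ω_r ∈ V[[t]] ⊆ K[[z]][[t]]` are algebraically independent over `Q(V)(t)`,
`D = Q(V)(t,ω_1,...,ω_r) ∩ V[[t]]`, and `γ ∈ zK[[z]]`.  If `γ, ω_1(γ),...,ω_r(γ)` are algebraically
independent over `Q(V)` then `(t-γ)K[[z,t]] ∩ D = (0)`.  Fraction fields are
realized as subfields of `FractionRing (K[[z]][[t]])` resp. `FractionRing K[[z]]`. -/
theorem stmt10 (K : Type*) [Field K] (r : ℕ)
    (V : Subring (PowerSeries K)) [IsDomain V] [IsDiscreteValuationRing V]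
    (hpoly : ∀ p : Polynomial K, (p : PowerSeries K) ∈ V)
    (hdense : ∀ f : PowerSeries K, ∀ k : ℕ, ∃ v ∈ V, ∀ j < k,
      PowerSeries.coeff (R := K) j f = PowerSeries.coeff (R := K) j v)
    (ω : Fin r → PowerSeries (PowerSeries K))
    (hωV : ∀ (i : Fin r) (j : ℕ), PowerSeries.coeff (R := PowerSeries K) j (ω i) ∈ V)
    (hωind : AlgebraicIndependent
      (Subfield.closure
        ((fun v : PowerSeries K =>
            algebraMap (PowerSeries (PowerSeries K))
              (FractionRing (PowerSeries (PowerSeries K)))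
              (PowerSeries.C (R := PowerSeries K) v)) '' (V : Set (PowerSeries K)) ∪
          {algebraMap (PowerSeries (PowerSeries K))
            (FractionRing (PowerSeries (PowerSeries K))) PowerSeries.X}))
      (fun i : Fin r => algebraMap (PowerSeries (PowerSeries K))
        (FractionRing (PowerSeries (PowerSeries K))) (ω i)))
    (γ : PowerSeries K) (hγ : PowerSeries.constantCoeff (R := K) γ = 0)
    (hindep :
      AlgebraicIndependent
      (Subfield.closure
        ((algebraMap (PowerSeries K) (FractionRing (PowerSeries K))) ''
          (V : Set (PowerSeries K))))
      (Fin.cons (algebraMap (PowerSeries K) (FractionRing (PowerSeries K)) γ)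
        (fun i : Fin r => algebraMap (PowerSeries K) (FractionRing (PowerSeries K))
          (psEval (ω i) γ)))) :
    ∀ f : PowerSeries (PowerSeries K),
      (∀ j : ℕ, PowerSeries.coeff (R := PowerSeries K) j f ∈ V) →
      algebraMap (PowerSeries (PowerSeries K)) (FractionRing (PowerSeries (PowerSeries K))) f ∈
        Subfield.closure
          ((fun v : PowerSeries K =>
              algebraMap (PowerSeries (PowerSeries K))
                (FractionRing (PowerSeries (PowerSeries K)))
                (PowerSeries.C (R := PowerSeries K) v)) '' (V : Set (PowerSeries K)) ∪
            {algebraMap (PowerSeries (PowerSeries K))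
              (FractionRing (PowerSeries (PowerSeries K))) PowerSeries.X} ∪
            Set.range (fun i : Fin r => algebraMap (PowerSeries (PowerSeries K))
              (FractionRing (PowerSeries (PowerSeries K))) (ω i))) →
      f ∈ Ideal.span {(PowerSeries.X - PowerSeries.C (R := PowerSeries K) γ :
        PowerSeries (PowerSeries K))} →
      f = 0 :=
  stmt10_general K r V ω γ hγ hindep
end

section
/- Let R_1 = K[[x_1,...,x_n]] and R = R_1[[y]] = K[[x_1,...,x_n,y]] over a field K, and let P be a prime ideal of R with P ∩ R_1 = (0). If dim(R/P) ≤ 1, then R/P is a finite R_1-module and dim(R/P) = n — a contradiction when n ≥ 2; consequently, for n ≥ 2, every prime P of R with P ∩ R_1 = (0) satisfies dim(R/P) ≥ 2. -/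
/-!
Let `A` be a complete local ring with residue field `k` and `P` a prime of `A⟦X⟧` with
`P ∩ A = 0`. If `P` lies in the kernel of `A⟦X⟧ → k⟦X⟧`, it lies strictly (a nonzero
`a ∈ 𝔪_A` is in the kernel but not in `P`), and `dim k⟦X⟧ ≥ 1` gives `dim A⟦X⟧/P ≥ 2` as soon
as `A` is not a field. Otherwise `P` contains a power series with a unit coefficient,
Weierstrass division by it makes `A⟦X⟧/P` a finite extension of `A`, and going up gives
`dim A⟦X⟧/P ≥ dim A`. For `A = K[[x_1,…,x_n]]` the maximal ideal is `(x_1,…,x_n)`, so `A` is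
complete, and `dim A ≥ n`.
-/

open IsLocalRing PowerSeries

theorem ringKrullDim_le_of_isIntegral {R S : Type*} [CommRing R] [CommRing S] [Algebra R S]
    [Algebra.IsIntegral R S] (hinj : Function.Injective (algebraMap R S)) :
    ringKrullDim R ≤ ringKrullDim S := by
  refine iSup_le fun l => ?_
  obtain ⟨P, -, hP, hPl⟩ :=
    Ideal.exists_ideal_over_prime_of_isIntegral l.head.asIdeal (⊥ : Ideal S) (by
      rw [← RingHom.ker_eq_comap_bot, (RingHom.injective_iff_ker_eq_bot _).mp hinj]; exact bot_le)
  have : P.LiesOver l.head.asIdeal := ⟨hPl.symm⟩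
  obtain ⟨L, hlen, -, -⟩ := Ideal.exists_ltSeries_of_hasGoingUp l P
  exact hlen ▸ Order.LTSeries.length_le_krullDim L

namespace PowerSeries

variable {A : Type*} [CommRing A] [IsLocalRing A]

theorem two_le_ringKrullDim_quotient_of_le_ker_map_residue (hA : ¬IsField A)
    {P : Ideal A⟦X⟧} [P.IsPrime] (hP : P.comap C = ⊥)
    (hle : P ≤ RingHom.ker (map (residue A))) :
    2 ≤ ringKrullDim (A⟦X⟧ ⧸ P) := by
  obtain ⟨a, ha, ha₀⟩ := Submodule.exists_mem_ne_zero_of_ne_bot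
    (mt isField_iff_maximalIdeal_eq.mpr hA)
  have hCa : Ideal.Quotient.mk P (C a) ≠ 0 := fun h => ha₀ <| by
    have : a ∈ P.comap C := (Ideal.Quotient.eq_zero_iff_mem (I := P)).mp h
    rwa [hP, Ideal.mem_bot] at this
  let φ := Ideal.Quotient.lift P (map (residue A)) hle
  have hφ : Function.Surjective φ := Ideal.Quotient.lift_surjective_of_surjective _ _
    (map_surjective _ residue_surjective)
  have hφCa : φ (Ideal.Quotient.mk P (C a)) = 0 := by
    change map (residue A) (C a) = 0
    rw [map_C, (residue_eq_zero_iff a).mpr ha, map_zero]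
  have hk : 1 ≤ ringKrullDim (ResidueField A)⟦X⟧ := by
    simpa [ringKrullDim_eq_zero_of_field] using
      ringKrullDim_succ_le_ringKrullDim_powerseries (R := ResidueField A)
  calc (2 : WithBot ℕ∞) = 1 + 1 := by norm_num
    _ ≤ ringKrullDim (ResidueField A)⟦X⟧ + 1 := by gcongr
    _ ≤ ringKrullDim (A⟦X⟧ ⧸ P) :=
      ringKrullDim_succ_le_of_surjective φ hφ (mem_nonZeroDivisors_of_ne_zero hCa) hφCa

variable [IsAdicComplete (maximalIdeal A) A]

theorem module_finite_quotient_of_map_residue_ne_zero {P : Ideal A⟦X⟧} {f : A⟦X⟧}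
    (hfP : f ∈ P) (hf : f.map (residue A) ≠ 0) : Module.Finite A (A⟦X⟧ ⧸ P) := by
  let φ : Polynomial.degreeLT A (f.map (residue A)).order.toNat →ₗ[A] A⟦X⟧ ⧸ P :=
    (Ideal.Quotient.mkₐ A P).toLinearMap ∘ₗ
      (Polynomial.coeToPowerSeries.algHom A).toLinearMap ∘ₗ Submodule.subtype _
  refine Module.Finite.of_surjective φ fun z => ?_
  obtain ⟨g, rfl⟩ := Ideal.Quotient.mk_surjective z
  refine ⟨⟨g %ʷ f, Polynomial.mem_degreeLT.mpr (degree_weierstrassMod_lt g f)⟩, ?_⟩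
  have hg := eq_mul_weierstrassDiv_add_weierstrassMod g hf
  simp only [φ, LinearMap.coe_comp, Function.comp_apply, Submodule.subtype_apply,
    AlgHom.toLinearMap_apply, Polynomial.coeToPowerSeries.algHom_apply, Ideal.Quotient.mkₐ_eq_mk,
    Algebra.algebraMap_self, map_id, id_eq, Ideal.Quotient.eq]
  rw [show (g %ʷ f : A⟦X⟧) - g = -(f * (g /ʷ f)) by linear_combination -hg]
  exact P.neg_mem (P.mul_mem_right _ hfP)

theorem ringKrullDim_le_ringKrullDim_quotient_of_map_residue_ne_zero {P : Ideal A⟦X⟧}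
    (hP : P.comap C = ⊥) {f : A⟦X⟧} (hfP : f ∈ P) (hf : f.map (residue A) ≠ 0) :
    ringKrullDim A ≤ ringKrullDim (A⟦X⟧ ⧸ P) := by
  have := module_finite_quotient_of_map_residue_ne_zero hfP hf
  have : Algebra.IsIntegral A (A⟦X⟧ ⧸ P) := Algebra.IsIntegral.of_finite A _
  refine ringKrullDim_le_of_isIntegral <| (RingHom.injective_iff_ker_eq_bot _).mpr ?_
  change RingHom.ker ((Ideal.Quotient.mk P).comp C) = ⊥
  rwa [← RingHom.comap_ker, Ideal.mk_ker]

theorem two_le_ringKrullDim_quotient_of_comap_C_eq_bot (hA : 2 ≤ ringKrullDim A)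
    {P : Ideal A⟦X⟧} [P.IsPrime] (hP : P.comap C = ⊥) :
    2 ≤ ringKrullDim (A⟦X⟧ ⧸ P) := by
  by_cases hle : P ≤ RingHom.ker (map (residue A))
  · refine two_le_ringKrullDim_quotient_of_le_ker_map_residue (fun hfield => ?_) hP hle
    rw [ringKrullDim_eq_zero_of_isField hfield] at hA
    exact absurd hA (by decide)
  · obtain ⟨f, hfP, hf⟩ := SetLike.not_le_iff_exists.mp hle
    exact hA.trans (ringKrullDim_le_ringKrullDim_quotient_of_map_residue_ne_zero hP hfP hf)

end PowerSeries

namespace MvPowerSeries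

theorem natCast_le_ringKrullDim (R : Type*) [CommRing R] [Nontrivial R] (n : ℕ) :
    n ≤ ringKrullDim (MvPowerSeries (Fin n) R) := by
  induction n with
  | zero => exact ringKrullDim_nonneg_of_nontrivial
  | succ n ih =>
    rw [ringKrullDim_eq_of_ringEquiv (finSuccEquiv R n).toRingEquiv, Nat.cast_succ]
    exact (add_le_add_left ih 1).trans ringKrullDim_succ_le_ringKrullDim_powerseries

theorem ker_constantCoeff_eq_span_range_X (R : Type*) [CommRing R] (n : ℕ) :
    RingHom.ker (constantCoeff : MvPowerSeries (Fin n) R →+* R) = Ideal.span (Set.range X) := by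
  refine le_antisymm ?_ (Ideal.span_le.mpr <| Set.range_subset_iff.mpr fun i => by simp)
  induction n with
  | zero =>
    intro p hp
    convert Ideal.zero_mem _
    ext s
    rw [Subsingleton.elim s 0, coeff_zero_eq_constantCoeff_apply, hp, map_zero]
  | succ n ih =>
    intro p hp
    set e := finSuccEquiv R n
    set F := e p
    have hF₀ : PowerSeries.constantCoeff F ∈ Ideal.span (Set.range X) := by
      refine ih ?_
      rw [RingHom.mem_ker, ← coeff_zero_eq_constantCoeff_apply,
        ← PowerSeries.coeff_zero_eq_constantCoeff_apply, coeff_coeff_finSuccEquiv]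
      simpa using hp
    have hsplit : p = X 0 * e.symm (PowerSeries.mk fun k => PowerSeries.coeff (k + 1) F) +
        (e.symm.toRingHom.comp PowerSeries.C) (PowerSeries.constantCoeff F) := by
      apply e.injective
      simpa [e, finSuccEquiv_X_zero] using eq_X_mul_shift_add_const F
    rw [hsplit]
    refine Ideal.add_mem _ (Ideal.mul_mem_right _ _ (Ideal.subset_span ⟨0, rfl⟩)) ?_
    refine Ideal.span_le.mpr ?_ (Ideal.mem_map_of_mem _ hF₀ |> (Ideal.map_span _ _).le)
    rintro _ ⟨_, ⟨j, rfl⟩, rfl⟩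
    refine Ideal.subset_span ⟨j.succ, ?_⟩
    rw [RingHom.comp_apply, RingEquiv.toRingHom_eq_coe, RingEquiv.coe_toRingHom,
      AlgEquiv.coe_ringEquiv, AlgEquiv.eq_symm_apply, finSuccEquiv_X_succ]

theorem maximalIdeal_eq_span_range_X (K : Type*) [Field K] (n : ℕ) :
    maximalIdeal (MvPowerSeries (Fin n) K) = Ideal.span (Set.range X) := by
  rw [← ker_constantCoeff_eq_span_range_X]
  exact (eq_maximalIdeal (RingHom.ker_isMaximal_of_surjective _
    fun a => ⟨C a, constantCoeff_C a⟩)).symm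

instance (K : Type*) [Field K] (n : ℕ) :
    IsAdicComplete (maximalIdeal (MvPowerSeries (Fin n) K)) (MvPowerSeries (Fin n) K) := by
  rw [maximalIdeal_eq_span_range_X]
  infer_instance

end MvPowerSeries

/-- For `n ≥ 2`, `R₁ = K[[x_1,...,x_n]]` and `R = R₁[[y]]`, every prime `P` of `R`
contracting to `(0)` in `R₁` satisfies `dim R/P ≥ 2`. -/
theorem stmt11 (K : Type*) [Field K] (n : ℕ) (hn : 2 ≤ n)
    (P : Ideal (PowerSeries (MvPowerSeries (Fin n) K))) (hP : P.IsPrime)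
    (hcon : Ideal.comap (PowerSeries.C : MvPowerSeries (Fin n) K →+* PowerSeries (MvPowerSeries (Fin n) K)) P = ⊥) :
    2 ≤ ringKrullDim (PowerSeries (MvPowerSeries (Fin n) K) ⧸ P) :=
  two_le_ringKrullDim_quotient_of_comap_C_eq_bot
    ((Nat.cast_le.mpr hn).trans (MvPowerSeries.natCast_le_ringKrullDim K n)) hcon
end

section
/- Let φ : K[[z_1,...,z_{m-s}, t_{m-s+1},...,t_m]] → K[[z_1,...,z_m]] be the K-algebra homomorphism fixing z_1,...,z_{m-s} and sending t_{m-i+1} to f_i for 1 ≤ i ≤ s, where z_1,...,z_{m-s}, f_1,...,f_s is a regular sequence in K[[z_1,...,z_m]] with each f_i a monic polynomial in z_{m-i+1} over K[[z_1,...,z_{m-i}]] with coefficients in the maximal ideal (apart from the leading one). Then φ is injective and makes K[[z_1,...,z_m]] a finite free module over K[[z_1,...,z_{m-s}, t_{m-s+1},...,t_m]]. -/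
/-!
Give the variable `z_j` the weight `w_j`, decreasing in `j` fast enough that, for `g_j = z_j`
(`j < m - s`) and `g_j = f_{m-1-j}` otherwise, the monomial `z_j ^ D_j` (with `D_j = 1`
resp. `deg f`) is the unique monomial of least weight in `g_j`, with coefficient `1`; this is
where the distinguished shape of the `f_i` enters. Write every exponent as `d = D * e + b` with
`b < D`. Then the coefficient of `z ^ d` in `∑_b φ (H_b) z ^ b` is the coefficient of `t ^ e`
in `H_b` plus terms involving only exponents of smaller weight, so this map is unitriangular
with respect to weight and hence bijective. Thus the monomials `z ^ b`, `b < D`, form a basis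
of the target over the source, which gives freeness, finiteness and injectivity of `φ`.
-/

/-- `F` is a monic "distinguished" polynomial of degree `deg` in the variable `z_v` with
coefficients in the power series ring on the variables `z_j`, `j ≤ v`, all of whose
non-leading coefficients lie in the maximal ideal. -/
def IsDistinguishedIn {K : Type*} [Field K] {m : ℕ}
    (F : MvPowerSeries (Fin m) K) (v : Fin m) (deg : ℕ) : Prop :=
  1 ≤ deg ∧
  (∀ d : Fin m →₀ ℕ, MvPowerSeries.coeff d F ≠ 0 → (∀ j ∈ d.support, j ≤ v) ∧ d v ≤ deg) ∧
  MvPowerSeries.coeff (Finsupp.single v deg) F = 1 ∧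
  (∀ d : Fin m →₀ ℕ, d v = deg → d ≠ Finsupp.single v deg → MvPowerSeries.coeff d F = 0) ∧
  (∀ j < deg, MvPowerSeries.coeff (Finsupp.single v j) F = 0)

open Function MvPowerSeries Finsupp

section Unitriangular

variable {X M : Type*} [AddCommGroup M] (wt : X → ℕ)

/-- Solves `v + N v = u` by recursion on `wt`, assuming `N v x` only depends on `v` below `wt x`. -/
noncomputable def solveLowerTriangular (N : (X → M) → X → M) (u : X → M) (x : X) : M :=
  u x - N (fun y => if wt y < wt x then solveLowerTriangular N u y else 0) x
termination_by wt x

theorem AddMonoidHom.bijective_of_unitriangular (T : (X → M) →+ (X → M))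
    (hT : ∀ v x, (∀ y, wt y < wt x → v y = 0) → T v x = v x) : Bijective T := by
  refine ⟨(injective_iff_map_eq_zero T).mpr fun v hv => ?_, fun u => ?_⟩
  · suffices ∀ n x, wt x < n → v x = 0 from funext fun x => this _ x (Nat.lt_succ_self _)
    intro n
    induction n with
    | zero => exact fun x h => absurd h (Nat.not_lt_zero _)
    | succ n ih =>
      intro x hx
      rw [← hT v x fun y hy => ih y (by omega), hv, Pi.zero_apply]
  · let v := solveLowerTriangular wt (fun v => T v - v) u
    refine ⟨v, funext fun x => ?_⟩
    let v' : X → M := fun y => if wt y < wt x then v y else 0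
    have hv : v x = u x - (T v' x - v' x) := by
      simp only [v]; rw [solveLowerTriangular]; rfl
    have hlow : T (v - v') x = (v - v') x := hT _ x fun y hy => by simp [v', hy]
    rw [map_sub, Pi.sub_apply, Pi.sub_apply, hv] at hlow
    rw [← sub_eq_zero, ← sub_eq_zero.mpr hlow]
    abel

end Unitriangular

namespace MvPowerSeries

variable {σ R : Type*} [CommSemiring R] (w : σ → ℕ)

def HasMonicLeadingTerm (F : MvPowerSeries σ R) (ℓ : σ →₀ ℕ) : Prop :=
  coeff ℓ F = 1 ∧ ∀ d, d ≠ ℓ → coeff d F ≠ 0 → weight w ℓ < weight w d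

variable {w}

theorem hasMonicLeadingTerm_one : HasMonicLeadingTerm w (1 : MvPowerSeries σ R) 0 := by
  classical
  refine ⟨coeff_zero_one, fun d hd h => absurd ?_ h⟩
  rw [coeff_one, if_neg hd]

theorem hasMonicLeadingTerm_X (j : σ) :
    HasMonicLeadingTerm w (X j : MvPowerSeries σ R) (single j 1) := by
  classical
  refine ⟨by simp [coeff_X], fun d hd h => absurd ?_ h⟩
  rw [coeff_X, if_neg hd]

theorem HasMonicLeadingTerm.mul {F G : MvPowerSeries σ R} {ℓ ℓ' : σ →₀ ℕ}
    (hF : HasMonicLeadingTerm w F ℓ) (hG : HasMonicLeadingTerm w G ℓ') :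
    HasMonicLeadingTerm w (F * G) (ℓ + ℓ') := by
  classical
  have key : ∀ p q : σ →₀ ℕ, coeff p F * coeff q G ≠ 0 →
      (p = ℓ ∧ q = ℓ') ∨ weight w (ℓ + ℓ') < weight w (p + q) := by
    intro p q h
    have hp := left_ne_zero_of_mul h
    have hq := right_ne_zero_of_mul h
    rw [map_add, map_add]
    rcases eq_or_ne p ℓ with rfl | hpℓ <;> rcases eq_or_ne q ℓ' with rfl | hqℓ
    · exact .inl ⟨rfl, rfl⟩
    · exact .inr (by have := hG.2 q hqℓ hq; omega)
    · exact .inr (by have := hF.2 p hpℓ hp; omega)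
    · exact .inr (by have := hF.2 p hpℓ hp; have := hG.2 q hqℓ hq; omega)
  refine ⟨?_, fun d hd h => ?_⟩
  · rw [coeff_mul, Finset.sum_eq_single (ℓ, ℓ'), hF.1, hG.1, one_mul]
    · rintro ⟨p, q⟩ hpq hne
      rw [Finset.HasAntidiagonal.mem_antidiagonal] at hpq
      by_contra h
      rcases key p q h with ⟨rfl, rfl⟩ | hlt
      · exact hne rfl
      · exact hlt.ne' (congrArg _ hpq)
    · simp
  · obtain ⟨⟨p, q⟩, hpq, hne⟩ :=
      Finset.exists_ne_zero_of_sum_ne_zero (coeff_mul d F G ▸ h)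
    rw [Finset.HasAntidiagonal.mem_antidiagonal] at hpq
    rcases key p q hne with ⟨rfl, rfl⟩ | hlt
    · exact absurd hpq.symm hd
    · rwa [hpq] at hlt

theorem HasMonicLeadingTerm.pow {F : MvPowerSeries σ R} {ℓ : σ →₀ ℕ}
    (hF : HasMonicLeadingTerm w F ℓ) (k : ℕ) : HasMonicLeadingTerm w (F ^ k) (k • ℓ) := by
  induction k with
  | zero => simpa using hasMonicLeadingTerm_one
  | succ k ih => simpa [pow_succ, succ_nsmul] using ih.mul hF

theorem HasMonicLeadingTerm.prod {ι : Type*} {s : Finset ι} {F : ι → MvPowerSeries σ R}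
    {ℓ : ι → σ →₀ ℕ} (h : ∀ i ∈ s, HasMonicLeadingTerm w (F i) (ℓ i)) :
    HasMonicLeadingTerm w (∏ i ∈ s, F i) (∑ i ∈ s, ℓ i) := by
  classical
  induction s using Finset.induction_on with
  | empty => simpa using hasMonicLeadingTerm_one
  | insert i s hi ih =>
    rw [Finset.prod_insert hi, Finset.sum_insert hi]
    exact (h i (s.mem_insert_self i)).mul (ih fun j hj => h j (Finset.mem_insert_of_mem hj))

end MvPowerSeries

section Distinguished

variable {K : Type*} [Field K] {m : ℕ}

theorem isDistinguishedIn_X (v : Fin m) :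
    IsDistinguishedIn (X v : MvPowerSeries (Fin m) K) v 1 := by
  classical
  refine ⟨le_rfl, fun d hd => ?_, by simp [coeff_X], fun d _ hne => by rw [coeff_X, if_neg hne],
    fun j hj => ?_⟩
  · rw [coeff_X, ite_ne_right_iff] at hd
    obtain ⟨rfl, -⟩ := hd
    refine ⟨fun j hj => ?_, by simp⟩
    rw [support_single _ one_ne_zero, Finset.mem_singleton] at hj
    exact hj.le
  · rw [Nat.lt_one_iff.mp hj, single_zero, coeff_X, if_neg (single_ne_zero.mpr one_ne_zero).symm]

theorem IsDistinguishedIn.hasMonicLeadingTerm {F : MvPowerSeries (Fin m) K} {v : Fin m}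
    {deg : ℕ} (hF : IsDistinguishedIn F v deg) {w : Fin m → ℕ}
    (hw : ∀ j < v, w v * deg < w j) : HasMonicLeadingTerm w F (single v deg) := by
  obtain ⟨-, hsupp, hlead, htop, hpure⟩ := hF
  refine ⟨hlead, fun d hd hne => ?_⟩
  obtain ⟨hle, hdv⟩ := hsupp d hne
  have hdv' : d v < deg := hdv.lt_of_ne fun h => hne (htop d h hd)
  -- `d` is not a pure power of `z_v`, so it involves some earlier, heavier variable
  obtain ⟨j, hjv, hj⟩ : ∃ j, j ≠ v ∧ d j ≠ 0 := by
    by_contra! h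
    have : d = single v (d v) := by
      ext j
      rcases eq_or_ne j v with rfl | hj
      · simp
      · simp [h j hj, Ne.symm hj]
    exact hne (this ▸ hpure _ hdv')
  have hjlt : j < v := (hle j (mem_support_iff.mpr hj)).lt_of_ne hjv
  calc weight w (single v deg) = w v * deg := by simp [weight_single, mul_comm]
    _ < w j := hw j hjlt
    _ ≤ d j * w j := Nat.le_mul_of_pos_left _ (Nat.pos_of_ne_zero hj)
    _ ≤ weight w d := by
      rw [weight_eq_sum]
      exact Finset.single_le_sum (f := fun i => d i • w i) (fun _ _ => Nat.zero_le _)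
        (Finset.mem_univ j)

theorem exists_weight_mul_lt (D : Fin m → ℕ) :
    ∃ w : Fin m → ℕ, ∀ i j, i < j → w j * D j < w i := by
  set N := Finset.univ.sup D
  refine ⟨fun j => (N + 1) ^ (m - j), fun i j hij => ?_⟩
  calc (N + 1) ^ (m - j) * D j ≤ (N + 1) ^ (m - j) * N :=
        Nat.mul_le_mul_left _ (Finset.le_sup (Finset.mem_univ j))
    _ < (N + 1) ^ (m - j + 1) := by
        rw [pow_succ]
        exact Nat.mul_lt_mul_of_pos_left (Nat.lt_succ_self N) (by positivity)
    _ ≤ (N + 1) ^ (m - i) := Nat.pow_le_pow_right N.succ_pos (by omega)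

end Distinguished

section ExpDivMod

variable {σ : Type*} [Fintype σ] [DecidableEq σ] {D : σ → ℕ}

noncomputable def boxExp (b : (j : σ) → Fin (D j)) : σ →₀ ℕ :=
  equivFunOnFinite.symm fun j => b j

theorem sum_smul_single_add_boxExp_apply (e : σ → ℕ) (b : (j : σ) → Fin (D j)) (i : σ) :
    (∑ j, e j • single j (D j) + boxExp b) i = e i * D i + b i := by
  simp [single_apply, boxExp]

noncomputable def expDivModEquiv (hD : ∀ j, 0 < D j) :
    (σ → ℕ) × ((j : σ) → Fin (D j)) ≃ (σ →₀ ℕ) where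
  toFun p := ∑ j, p.1 j • single j (D j) + boxExp p.2
  invFun d := (fun j => d j / D j, fun j => ⟨d j % D j, Nat.mod_lt _ (hD j)⟩)
  left_inv p := by
    ext j
    · dsimp only
      rw [sum_smul_single_add_boxExp_apply, Nat.mul_comm, Nat.mul_add_div (hD j),
        Nat.div_eq_of_lt (p.2 j).isLt, add_zero]
    · simp only [sum_smul_single_add_boxExp_apply, Nat.mul_add_mod_self_right,
        Nat.mod_eq_of_lt (p.2 j).isLt]
  right_inv d := by
    ext j
    dsimp only
    rw [sum_smul_single_add_boxExp_apply]
    exact Nat.div_add_mod' ..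

theorem expDivModEquiv_apply (hD : ∀ j, 0 < D j) (e : σ → ℕ) (b : (j : σ) → Fin (D j)) :
    expDivModEquiv hD (e, b) = ∑ j, e j • single j (D j) + boxExp b :=
  rfl

variable {R : Type*} [CommRing R]

noncomputable def expDivModCoeffEquiv (hD : ∀ j, 0 < D j) :
    ((σ →₀ ℕ) → R) ≃+ (((j : σ) → Fin (D j)) → MvPowerSeries σ R) where
  toFun v b dd := v (expDivModEquiv hD (equivFunOnFinite dd, b))
  invFun H d := coeff (equivFunOnFinite.symm (expDivModEquiv hD |>.symm d).1)
    (H (expDivModEquiv hD |>.symm d).2)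
  left_inv v := funext fun d => by
    show v (expDivModEquiv hD (equivFunOnFinite (equivFunOnFinite.symm _), _)) = v d
    simp
  right_inv H := funext fun b => MvPowerSeries.ext fun dd => by
    show coeff (equivFunOnFinite.symm (expDivModEquiv hD |>.symm
      (expDivModEquiv hD (equivFunOnFinite dd, b))).1) (H _) = coeff dd (H b)
    simp
  map_add' _ _ := rfl

theorem coeff_expDivModCoeffEquiv (hD : ∀ j, 0 < D j) (v : (σ →₀ ℕ) → R)
    (b : (j : σ) → Fin (D j)) (e : σ →₀ ℕ) :
    coeff e (expDivModCoeffEquiv hD v b) = v (expDivModEquiv hD (equivFunOnFinite e, b)) :=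
  rfl

variable {w : σ → ℕ} {g : σ → MvPowerSeries σ R}

omit [DecidableEq σ] in
theorem hasMonicLeadingTerm_prod_pow (hg : ∀ j, HasMonicLeadingTerm w (g j) (single j (D j)))
    (e : σ → ℕ) : HasMonicLeadingTerm w (∏ j, g j ^ e j) (∑ j, e j • single j (D j)) :=
  HasMonicLeadingTerm.prod fun j _ => (hg j).pow (e j)

theorem mul_coeff_prod_pow_eq_ite (hD : ∀ j, 0 < D j)
    (hg : ∀ j, HasMonicLeadingTerm w (g j) (single j (D j))) {v : (σ →₀ ℕ) → R}
    {d : σ →₀ ℕ} (hv : ∀ y, weight w y < weight w d → v y = 0) (e : σ → ℕ)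
    {b : (j : σ) → Fin (D j)} (hb : boxExp b ≤ d) :
    v (expDivModEquiv hD (e, b)) * coeff (d - boxExp b) (∏ j, g j ^ e j) =
      if expDivModEquiv hD (e, b) = d then v d else 0 := by
  have hlead := hasMonicLeadingTerm_prod_pow hg e
  rw [expDivModEquiv_apply]
  split_ifs with h
  · rw [← h, add_tsub_cancel_right, hlead.1, mul_one]
  · by_contra hne
    have hlt := hlead.2 _ (fun h' => h (by rw [← h', tsub_add_cancel_of_le hb]))
      (right_ne_zero_of_mul hne)
    refine left_ne_zero_of_mul hne (hv _ ?_)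
    have hd := congrArg (weight w) (tsub_add_cancel_of_le hb)
    rw [map_add] at hd ⊢
    omega

theorem bijective_sum_map_mul_monomial (hD : ∀ j, 0 < D j)
    (hg : ∀ j, HasMonicLeadingTerm w (g j) (single j (D j)))
    (φ : MvPowerSeries σ R →+* MvPowerSeries σ R) (S : (σ →₀ ℕ) → Finset (σ → ℕ))
    (hS : ∀ d e, ∑ j, e j ≤ degree d → e ∈ S d)
    (hφ : ∀ F d, coeff d (φ F) =
      ∑ e ∈ S d, coeff (equivFunOnFinite.symm e) F * coeff d (∏ j, g j ^ e j)) :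
    Bijective fun H : ((j : σ) → Fin (D j)) → MvPowerSeries σ R =>
      ∑ b, φ (H b) * monomial (boxExp b) 1 := by
  set Ψ := fun H : ((j : σ) → Fin (D j)) → MvPowerSeries σ R =>
      ∑ b, φ (H b) * monomial (boxExp b) 1
  set E := expDivModEquiv hD
  set unpack := expDivModCoeffEquiv (R := R) hD
  let T : ((σ →₀ ℕ) → R) →+ ((σ →₀ ℕ) → R) :=
    AddMonoidHom.mk' (fun v d => coeff d (Ψ (unpack v))) fun v v' => by
      ext d
      simp [Ψ, map_add, add_mul, Finset.sum_add_distrib]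
  have hT : ∀ v d, (∀ y, weight w y < weight w d → v y = 0) → T v d = v d := by
    intro v d hv
    obtain ⟨⟨q, r⟩, rfl⟩ := E.surjective d
    have hexpand : T v (E (q, r)) = ∑ b, if boxExp b ≤ E (q, r) then
        ∑ e ∈ S (E (q, r) - boxExp b), if E (e, b) = E (q, r) then v (E (q, r)) else 0
        else 0 := by
      simp only [T, Ψ, AddMonoidHom.mk'_apply, map_sum, coeff_mul_monomial, mul_one]
      refine Finset.sum_congr rfl fun b _ => ?_
      split_ifs with hb
      · simp only [hφ, coeff_expDivModCoeffEquiv, unpack, Equiv.apply_symm_apply]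
        exact Finset.sum_congr rfl fun e _ => mul_coeff_prod_pow_eq_ite hD hg hv e hb
      · rfl
    have hq : q ∈ S (E (q, r) - boxExp r) := by
      refine hS _ _ ?_
      rw [expDivModEquiv_apply, add_tsub_cancel_right, map_sum]
      refine Finset.sum_le_sum fun j _ => ?_
      rw [map_nsmul, degree_single, smul_eq_mul]
      exact Nat.le_mul_of_pos_right _ (hD j)
    rw [hexpand, Finset.sum_eq_single r,
      if_pos (by rw [expDivModEquiv_apply]; exact le_add_self),
      Finset.sum_eq_single_of_mem q hq, if_pos rfl]
    · intro e _ he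
      rw [if_neg (by simpa using he)]
    · intro b _ hb
      split_ifs
      · exact Finset.sum_eq_zero fun e _ => if_neg (by simp [hb])
      · rfl
    · simp
  exact (Bijective.of_comp_iff Ψ unpack.bijective).mp (T.bijective_of_unitriangular _ hT)

end ExpDivMod

theorem Finset.Nat.mem_biUnion_range_antidiagonalTuple {k n : ℕ} {e : Fin k → ℕ} :
    e ∈ (Finset.range (n + 1)).biUnion (Finset.Nat.antidiagonalTuple k) ↔ ∑ i, e i ≤ n := by
  simp [Finset.Nat.mem_antidiagonalTuple]

theorem Finset.Nat.sum_range_sum_antidiagonalTuple {M : Type*} [AddCommMonoid M] (k n : ℕ)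
    (f : (Fin k → ℕ) → M) :
    ∑ i ∈ Finset.range (n + 1), ∑ e ∈ Finset.Nat.antidiagonalTuple k i, f e =
      ∑ e ∈ (Finset.range (n + 1)).biUnion (Finset.Nat.antidiagonalTuple k), f e := by
  refine (Finset.sum_biUnion fun a _ b _ hab =>
    Finset.disjoint_left.mpr fun e hea heb => hab ?_).symm
  rw [← Finset.Nat.mem_antidiagonalTuple.mp hea, ← Finset.Nat.mem_antidiagonalTuple.mp heb]

theorem RingHom.injective_finite_free_of_bijective_sum_mul {A B ι : Type*} [CommRing A]
    [CommRing B] [Nontrivial B] [Fintype ι] (φ : A →+* B) (v : ι → B)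
    (hv : Bijective fun c : ι → A => ∑ i, φ (c i) * v i) :
    Injective φ ∧ φ.Finite ∧ @Module.Free A B _ _ (Module.compHom B φ) := by
  let := φ.toAlgebra
  have hlin : Bijective (Fintype.linearCombination A v) := by
    convert hv using 2 with c
    simp [Fintype.linearCombination_apply, Algebra.smul_def, RingHom.algebraMap_toAlgebra]
  let b : Module.Basis ι A B := .ofEquivFun (LinearEquiv.ofBijective _ hlin).symm
  have : Module.Free A B := .of_basis b
  exact ⟨FaithfulSMul.algebraMap_injective A B, .of_basis b, this⟩

open Finset in
/-- Let `z_0,...,z_{m-s-1}, f_0,...,f_{s-1}` be a regular sequence in `K[[z_0,...,z_{m-1}]]`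
with each `f_i` a monic distinguished polynomial in `z_{m-1-i}` over `K[[z_0,...,z_{m-2-i}]]`.
Then the substitution homomorphism `φ` of `K[[z_0,...,z_{m-1}]]` fixing `z_j` for
`j < m - s` and sending the remaining variables `t_j` (`j ≥ m - s`) to `f_{m-1-j}` (given
coefficientwise by the usual substitution formula) is injective and module-finite and makes
the target a free module over the source. -/
theorem stmt16 (K : Type*) [Field K] (m s : ℕ) (hs : s ≤ m)
    (f : Fin s → MvPowerSeries (Fin m) K)
    (hf : ∀ i : Fin s, ∃ deg : ℕ,
      IsDistinguishedIn (f i) ⟨m - 1 - (i : ℕ), by have := i.isLt; omega⟩ deg)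
    (φ : MvPowerSeries (Fin m) K →+* MvPowerSeries (Fin m) K)
    (hφ : ∀ (F : MvPowerSeries (Fin m) K) (d : Fin m →₀ ℕ),
      MvPowerSeries.coeff d (φ F) =
        ∑ nn ∈ Finset.range ((d.sum fun _ x => x) + 1),
          ∑ e ∈ Nat.antidiagonalTuple m nn,
            MvPowerSeries.coeff (Finsupp.equivFunOnFinite.symm e) F *
              MvPowerSeries.coeff d
                (∏ j : Fin m,
                  (if h : (j : ℕ) < m - s then (MvPowerSeries.X j : MvPowerSeries (Fin m) K)
                    else f ⟨m - 1 - (j : ℕ), by have := j.isLt; omega⟩) ^ e j)) :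
    Function.Injective φ ∧ φ.Finite ∧
      @Module.Free (MvPowerSeries (Fin m) K) (MvPowerSeries (Fin m) K) _ _
        (Module.compHom _ φ) := by
  choose deg hdeg using hf
  set g : Fin m → MvPowerSeries (Fin m) K := fun j =>
    if h : (j : ℕ) < m - s then X j else f ⟨m - 1 - (j : ℕ), by have := j.isLt; omega⟩
  let D : Fin m → ℕ := fun j =>
    if h : (j : ℕ) < m - s then 1 else deg ⟨m - 1 - (j : ℕ), by have := j.isLt; omega⟩
  have hdist : ∀ j, IsDistinguishedIn (g j) j (D j) := by
    intro j
    by_cases h : (j : ℕ) < m - s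
    · simpa [g, D, h] using isDistinguishedIn_X j
    · simp only [g, D, h, dite_false]
      convert hdeg _ using 2
      simp only
      omega
  obtain ⟨w, hw⟩ := exists_weight_mul_lt D
  exact φ.injective_finite_free_of_bijective_sum_mul _ <|
    bijective_sum_map_mul_monomial (fun j => (hdist j).1)
      (fun j => (hdist j).hasMonicLeadingTerm fun i hi => hw i j hi) φ
      (fun d => (range (degree d + 1)).biUnion (Nat.antidiagonalTuple m))
      (fun _ _ => Nat.mem_biUnion_range_antidiagonalTuple.mpr)
      (fun F d => (hφ F d).trans (Nat.sum_range_sum_antidiagonalTuple ..))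
end

section
/- Let K be a field and A = K[x_1,...,x_n]_{(x_1,...,x_n)} the localized polynomial ring with completion = K[[x_1,...,x_n]] , n ≥ 2. Then the generic formal fiber of A is nonzero: there exists a nonzero prime ideal P of K[[x_1,...,x_n]] with P ∩ A = (0). -/
/-!
Substituting `X a ↦ G = ∑ⱼ X b ^ j !` (with `a ≠ b`) is a ring map from `K[[X]]` to a domain,
so its kernel `P` is prime, and it contains `X a - G`. The factorial gaps make `G` transcendental
over the polynomials: in `p(G)`, the coefficient of `X ^ m₀ * X b ^ (i₀ * k !)`, where
`X a ^ i₀ * X ^ m₀` is a monomial of `p` of maximal `X a`-degree and `k` is large, is just the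
coefficient of that monomial. So `P` meets the polynomials only in `0`, and hence meets `A` only
in `0`.
-/

open Nat

theorem List.map_factorial_eq_replicate_of_sum_add_eq {d D k : ℕ} (hk : d + D < k) {l : List ℕ}
    (hl : l.length ≤ d) {x y : ℕ} (hx : x ≤ D) (hy : y ≤ D)
    (h : (l.map (·!)).sum + x = d * k ! + y) :
    l.map (·!) = List.replicate d k ! ∧ x = y := by
  have hDk : D < k ! := lt_of_lt_of_le (by omega) (self_le_factorial k)
  have hle : ∀ t ∈ l, t ≤ k := by
    intro t ht
    by_contra! hkt
    have h1 : (k + 1)! ≤ t ! := factorial_le hkt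
    have h2 : t ! ≤ (l.map (·!)).sum := List.le_sum_of_mem (List.mem_map_of_mem ht)
    rw [factorial_succ] at h1
    nlinarith
  have hsum_le : ∀ l' ⊆ l, (l'.map (·!)).sum ≤ l'.length * k ! := fun l' hl' => by
    simpa using List.sum_le_card_nsmul _ _ (List.forall_mem_map.mpr
      fun t ht => factorial_le (hle t (hl' ht)))
  have hlen : l.length = d := by
    by_contra hne
    have : l.length * k ! + k ! ≤ d * k ! := by nlinarith [show l.length + 1 ≤ d by omega]
    linarith [hsum_le l (List.Subset.refl l)]
  have hall : ∀ t ∈ l, t = k := by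
    intro t ht
    by_contra hne
    obtain ⟨j, rfl⟩ : ∃ j, k = j + 1 := ⟨k - 1, by omega⟩
    obtain ⟨e, rfl⟩ : ∃ e, d = e + 1 := ⟨d - 1, by have := List.length_pos_of_mem ht; omega⟩
    have ht_le : t ! ≤ j ! := factorial_le (by have := hle t ht; omega)
    have hsplit : (l.map (·!)).sum = t ! + ((l.erase t).map (·!)).sum := by
      simpa using ((List.perm_cons_erase ht).map (·!)).sum_eq
    have hrest := hsum_le (l.erase t) (List.erase_subset)
    rw [List.length_erase_of_mem ht, hlen, add_tsub_cancel_right] at hrest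
    have hD : D + 1 ≤ j * j ! := le_trans (by omega) (Nat.le_mul_of_pos_right j (factorial_pos j))
    rw [factorial_succ] at h hrest
    nlinarith
  have hrep : l.map (·!) = List.replicate d k ! :=
    List.eq_replicate_iff.mpr
      ⟨by simp [hlen], List.forall_mem_map.mpr fun t ht => by rw [hall t ht]⟩
  exact ⟨hrep, by simpa [hrep, List.sum_replicate] using h⟩

namespace MvPowerSeries

open Finsupp

variable {σ R : Type*}

open Classical in
noncomputable def lacunary (R : Type*) [Semiring R] (b : σ) : MvPowerSeries σ R :=
  fun ν => if ∃ j, ν = single b j ! then 1 else 0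

section Semiring

variable [Semiring R] {b : σ}

open Classical in
theorem coeff_lacunary (ν : σ →₀ ℕ) :
    coeff ν (lacunary R b) = if ∃ j, ν = single b j ! then 1 else 0 :=
  rfl

theorem exists_eq_single_of_coeff_lacunary_ne_zero {ν : σ →₀ ℕ}
    (h : coeff ν (lacunary R b) ≠ 0) : ∃ j, ν = single b j ! := by
  by_contra hν
  exact h (by rw [coeff_lacunary, if_neg hν])

theorem constantCoeff_lacunary : constantCoeff (lacunary R b) = 0 := by
  rw [← coeff_zero_eq_constantCoeff_apply, coeff_lacunary, if_neg]
  rintro ⟨j, hj⟩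
  exact factorial_ne_zero j (by simpa using congrArg (· b) hj.symm)

theorem exists_eq_single_of_coeff_lacunary_pow_ne_zero {c : ℕ} {ν : σ →₀ ℕ}
    (h : coeff ν (lacunary R b ^ c) ≠ 0) :
    ∃ l : List ℕ, l.length = c ∧ ν = single b (l.map (·!)).sum := by
  classical
  induction c generalizing ν with
  | zero =>
    rw [pow_zero, coeff_one, ite_ne_right_iff] at h
    exact ⟨[], rfl, by simpa using h.1⟩
  | succ c ih =>
    rw [pow_succ, coeff_mul] at h
    obtain ⟨⟨u, w⟩, huw, hne⟩ := Finset.exists_ne_zero_of_sum_ne_zero h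
    obtain ⟨l, hl, rfl⟩ := ih (left_ne_zero_of_mul hne)
    obtain ⟨j, rfl⟩ := exists_eq_single_of_coeff_lacunary_ne_zero (right_ne_zero_of_mul hne)
    refine ⟨j :: l, by simp [hl], ?_⟩
    rw [← Finset.HasAntidiagonal.mem_antidiagonal.mp huw, ← single_add]
    simp [add_comm]

theorem coeff_lacunary_pow_single_mul_factorial {c k : ℕ} (hc : c < k) :
    coeff (single b (c * k !)) (lacunary R b ^ c) = 1 := by
  classical
  induction c with
  | zero => simp
  | succ c ih =>
    rw [pow_succ, coeff_mul, Finset.sum_eq_single (single b (c * k !), single b k !)]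
    · rw [ih (by omega), coeff_lacunary, if_pos ⟨k, rfl⟩, one_mul]
    · rintro ⟨u, w⟩ huw hne
      by_contra h0
      obtain ⟨l, hl, rfl⟩ :=
        exists_eq_single_of_coeff_lacunary_pow_ne_zero (left_ne_zero_of_mul h0)
      obtain ⟨j, rfl⟩ := exists_eq_single_of_coeff_lacunary_ne_zero (right_ne_zero_of_mul h0)
      rw [Finset.HasAntidiagonal.mem_antidiagonal, ← single_add] at huw
      obtain ⟨hrep, -⟩ := List.map_factorial_eq_replicate_of_sum_add_eq (d := c + 1) (D := 0)
        (l := j :: l) (by omega) (by simp [hl]) le_rfl le_rfl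
        (by simpa [add_comm] using single_injective b huw)
      simp only [List.map_cons, List.replicate_succ, List.cons.injEq] at hrep
      apply hne
      rw [hrep.2, hrep.1, List.sum_replicate, smul_eq_mul]
    · intro h
      exact absurd (by rw [Finset.HasAntidiagonal.mem_antidiagonal, ← single_add, ← succ_mul]) h

open Classical in
theorem coeff_lacunary_pow_mul_monomial {d D k i : ℕ} (hk : d + D < k) (hi : i ≤ d)
    {m m₀ : σ →₀ ℕ} (hm : m b ≤ D) (hm₀ : m₀ b ≤ D) :
    coeff (m₀ + single b (d * k !)) (lacunary R b ^ i * monomial m 1) =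
      if i = d ∧ m = m₀ then 1 else 0 := by
  split_ifs with h
  · obtain ⟨rfl, rfl⟩ := h
    rw [coeff_mul_monomial, if_pos le_self_add, add_tsub_cancel_left, mul_one,
      coeff_lacunary_pow_single_mul_factorial (by omega)]
  · rw [coeff_mul_monomial]
    split_ifs with hle
    · by_contra hne
      obtain ⟨l, rfl, hl⟩ :=
        exists_eq_single_of_coeff_lacunary_pow_ne_zero (left_ne_zero_of_mul hne)
      have hsum := tsub_add_cancel_of_le hle
      rw [hl] at hsum
      obtain ⟨hrep, hmb⟩ := List.map_factorial_eq_replicate_of_sum_add_eq hk hi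
        (x := m b) (y := m₀ b) hm hm₀ (by linarith [show _ = _ by simpa using congrArg (· b) hsum])
      rw [hrep, List.sum_replicate, smul_eq_mul, add_comm] at hsum
      exact h ⟨by simpa using congrArg List.length hrep, add_right_cancel hsum⟩
    · rfl

theorem X_ne_lacunary [Nontrivial R] {a : σ} (hab : a ≠ b) : X a ≠ lacunary R b := by
  classical
  intro h
  have h1 := congrArg (coeff (single a 1)) h
  rw [coeff_X, if_pos rfl] at h1
  obtain ⟨j, hj⟩ := exists_eq_single_of_coeff_lacunary_ne_zero (h1 ▸ one_ne_zero)
  simpa [single_apply, hab.symm] using congrArg (· a) hj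

end Semiring

section CommSemiring

variable [CommSemiring R] [DecidableEq σ]

theorem prod_update_X_pow (a : σ) (g : MvPowerSeries σ R) (m : σ →₀ ℕ) :
    (m.prod fun s k => Function.update X a g s ^ k) = g ^ m a * monomial (m.erase a) 1 := by
  conv_lhs => rw [← single_add_erase a m]
  rw [prod_add_index' (fun _ => pow_zero _) (fun _ _ _ => pow_add _ _ _),
    prod_single_index (h := fun s k => Function.update X a g s ^ k) (pow_zero _),
    Function.update_self, monomial_one_eq]
  congr 1
  refine prod_congr fun s hs => ?_
  rw [Function.update_of_ne (Finset.ne_of_mem_erase (by rwa [support_erase] at hs))]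

theorem coeff_aeval_update_X (a : σ) (g : MvPowerSeries σ R) (p : MvPolynomial σ R)
    (μ : σ →₀ ℕ) :
    coeff μ (MvPolynomial.aeval (Function.update X a g) p) =
      ∑ m ∈ p.support, p.coeff m * coeff μ (g ^ m a * monomial (m.erase a) 1) := by
  conv_lhs => rw [p.as_sum]
  simp only [map_sum, MvPolynomial.aeval_monomial, prod_update_X_pow, algebraMap_apply,
    Algebra.algebraMap_self, RingHom.id_apply, coeff_C_mul]

theorem aeval_update_X_lacunary_ne_zero {a b : σ} (hab : a ≠ b) {p : MvPolynomial σ R}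
    (hp : p ≠ 0) : MvPolynomial.aeval (Function.update X a (lacunary R b)) p ≠ 0 := by
  obtain ⟨mh, hmh, hmax⟩ :=
    Finset.exists_max_image p.support (· a) (MvPolynomial.support_nonempty.mpr hp)
  have hdeg : ∀ m ∈ p.support, (m.erase a) b ≤ p.degreeOf b := fun m hm => by
    rw [erase_ne hab.symm]
    exact MvPolynomial.monomial_le_degreeOf b hm
  intro h0
  have hcoeff :=
    congrArg (coeff (mh.erase a + single b (mh a * (mh a + p.degreeOf b + 1)!))) h0
  rw [coeff_aeval_update_X, map_zero, Finset.sum_eq_single mh] at hcoeff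
  · rw [coeff_lacunary_pow_mul_monomial (by omega) le_rfl (hdeg mh hmh) (hdeg mh hmh),
      if_pos ⟨rfl, rfl⟩, mul_one] at hcoeff
    exact MvPolynomial.mem_support_iff.mp hmh hcoeff
  · intro m hm hne
    rw [coeff_lacunary_pow_mul_monomial (by omega) (hmax m hm) (hdeg m hm) (hdeg mh hmh),
      if_neg, mul_zero]
    rintro ⟨hma, hme⟩
    exact hne (by rw [← single_add_erase a m, ← single_add_erase a mh, hma, hme])
  · exact fun h => absurd hmh h

end CommSemiring

section CommRing

variable [CommRing R] [DecidableEq σ]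

theorem hasSubst_update_X_lacunary [Finite σ] (a b : σ) :
    HasSubst (Function.update X a (lacunary R b)) :=
  hasSubst_of_constantCoeff_zero fun s => by
    rcases eq_or_ne s a with rfl | hs
    · rw [Function.update_self, constantCoeff_lacunary]
    · rw [Function.update_of_ne hs, constantCoeff_X]

theorem subst_update_X_eq_self {a : σ} {g : MvPowerSeries σ R}
    (hg : HasSubst (Function.update X a g)) {f : MvPowerSeries σ R}
    (hf : ∀ d, coeff d f ≠ 0 → d a = 0) :
    subst (Function.update X a g) f = f := by
  refine Eq.trans ?_ (congrFun (subst_self (R := R)) f)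
  ext e
  rw [coeff_subst hg, coeff_subst HasSubst.X]
  congr 1
  ext d
  by_cases hd : coeff d f = 0
  · simp [hd]
  · congr 2
    refine prod_congr fun s hs => ?_
    rw [Function.update_of_ne]
    rintro rfl
    exact mem_support_iff.mp hs (hf d hd)

theorem X_sub_lacunary_mem_ker_substAlgHom [Finite σ] {a b : σ} (hab : a ≠ b) :
    X a - lacunary R b ∈
      RingHom.ker (substAlgHom (R := R) (hasSubst_update_X_lacunary (R := R) a b)) := by
  have hfix : subst (Function.update X a (lacunary R b)) (lacunary R b) = lacunary R b :=
    subst_update_X_eq_self (hasSubst_update_X_lacunary a b) fun d hd => by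
      obtain ⟨j, rfl⟩ := exists_eq_single_of_coeff_lacunary_ne_zero hd
      exact single_eq_of_ne hab
  rw [RingHom.mem_ker, map_sub, substAlgHom_X, Function.update_self, substAlgHom_apply, hfix,
    sub_self]

end CommRing

end MvPowerSeries

open MvPowerSeries

/-- For `n ≥ 2`, the generic formal fiber of the localized polynomial ring
`A = K[x_1,...,x_n]_{(x_1,...,x_n)}` is nonzero: there is a nonzero prime `P` of
`K[[x_1,...,x_n]]` with `P ∩ A = (0)`.  Here `A` is realized inside `K[[x_1,...,x_n]]` as the
set of series of the form `p/q` with `p, q` polynomials and `q(0) ≠ 0`. -/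
theorem stmt17 (K : Type*) [Field K] (n : ℕ) (hn : 2 ≤ n) :
    ∃ P : Ideal (MvPowerSeries (Fin n) K), P ≠ ⊥ ∧ P.IsPrime ∧
      ∀ f ∈ P, (∃ p q : MvPolynomial (Fin n) K,
        MvPolynomial.coeff 0 q ≠ 0 ∧
          f * (q : MvPowerSeries (Fin n) K) = (p : MvPowerSeries (Fin n) K)) → f = 0 := by
  obtain ⟨a, b, hab⟩ : ∃ a b : Fin n, a ≠ b := ⟨⟨0, by omega⟩, ⟨1, by omega⟩, by simp⟩
  have := NoZeroDivisors.to_isDomain (MvPowerSeries (Fin n) K)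
  have hsubst := hasSubst_update_X_lacunary (R := K) a b
  refine ⟨RingHom.ker (substAlgHom (R := K) hsubst), ?_, RingHom.ker_isPrime _, ?_⟩
  · exact (Submodule.ne_bot_iff _).mpr
      ⟨_, X_sub_lacunary_mem_ker_substAlgHom hab, sub_ne_zero.mpr (X_ne_lacunary hab)⟩
  · rintro f hf ⟨p, q, hq, hfq⟩
    have hp : p = 0 := by
      by_contra hp
      apply aeval_update_X_lacunary_ne_zero hab hp
      rw [← substAlgHom_coe hsubst, ← hfq, map_mul, RingHom.mem_ker.mp hf, zero_mul]
    have hq' : (q : MvPowerSeries (Fin n) K) ≠ 0 := fun h =>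
      hq (by rw [← MvPolynomial.coeff_coe, h, map_zero])
    rw [hp, MvPolynomial.coe_zero] at hfq
    exact (mul_eq_zero.mp hfq).resolve_right hq'
end
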